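/- arXiv:2410.04271 — 2 statements merged into one kernel-verified Lean document; each statement's English description precedes it below -/
import Mathlib

section
/- Let n ≥ 2, ℓ ≥ 1, let v₁,…,vₙ : Fin ℓ → ℝ be nonzero binary vectors, and let t ∈ [0,1], β > 0, δ > 0. Write c(i,j) = ⟨vᵢ, vⱼ⟩/(‖vᵢ‖·‖vⱼ‖) for the cosine similarity, and for each i define Aᵢ = (∑_{j ≠ i} exp(β·(c(i,j)+1)) · (∑_t vⱼ t)) / (∑_{k ≠ i} exp(β·(c(i,k)+1)) + exp(β·(t+1))). Then: (a) if there exist i ≠ j with c(i,j) ≥ t, there exists i with Aᵢ ≥ 1/n; and (b) if c(i,j) ≤ t − δ for all i ≠ j, then Aᵢ ≤ ℓ · n · exp(−β·δ) for every i. -/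
/-!
Write `w k = exp (β (c i k + 1))` and `e = exp (β (t + 1))`, so that `A i` is the average of
the counts `∑ s, v k s ∈ [1, ℓ]` with weights `w k`, plus an extra weight `e` on the value `0`.
If some `c i j ≥ t`, the largest weight `w` in row `i` dominates `e`, so the denominator is at
most `n w` while the numerator is at least `w`. If every `c i j ≤ t - δ`, each weight is at most
`exp (-β δ) e`, and `e` alone bounds the denominator from below.
-/

open Finset

/-- The Euclidean norm of a vector indexed by a finite type. -/
noncomputable def euclNorm {ι : Type*} [Fintype ι] (v : ι → ℝ) : ℝ :=
  Real.sqrt (∑ t, (v t) ^ 2)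

def IsBinary {ι : Type*} (v : ι → ℝ) : Prop :=
  ∀ s, v s = 0 ∨ v s = 1

namespace IsBinary

variable {ι : Type*} {v : ι → ℝ}

theorem nonneg (hv : IsBinary v) (s : ι) : 0 ≤ v s := by
  rcases hv s with h | h <;> simp [h]

theorem le_one (hv : IsBinary v) (s : ι) : v s ≤ 1 := by
  rcases hv s with h | h <;> simp [h]

theorem sum_nonneg [Fintype ι] (hv : IsBinary v) : 0 ≤ ∑ s, v s :=
  Finset.sum_nonneg fun s _ => hv.nonneg s

theorem sum_le_card [Fintype ι] (hv : IsBinary v) : ∑ s, v s ≤ Fintype.card ι := by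
  simpa using Finset.sum_le_sum fun s (_ : s ∈ univ) => hv.le_one s

theorem one_le_sum [Fintype ι] (hv : IsBinary v) (hnz : v ≠ 0) : 1 ≤ ∑ s, v s := by
  obtain ⟨s, hs⟩ : ∃ s, v s ≠ 0 := Function.ne_iff.mp hnz
  calc (1 : ℝ) = v s := ((hv s).resolve_left hs).symm
    _ ≤ ∑ s, v s := single_le_sum (fun s _ => hv.nonneg s) (mem_univ s)

end IsBinary

section WeightedAverage

variable {ι : Type*} {S : Finset ι} {w x : ι → ℝ} {e : ℝ}

theorem inv_card_add_one_le_weighted_sum_div (hw : ∀ k ∈ S, 0 ≤ w k)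
    (hx : ∀ k ∈ S, 1 ≤ x k) (he : 0 < e) {j₀ : ι} (hj₀ : j₀ ∈ S) (hej₀ : e ≤ w j₀) :
    1 / ((#S : ℝ) + 1) ≤ (∑ k ∈ S, w k * x k) / (∑ k ∈ S, w k + e) := by
  obtain ⟨j, hj, hmax⟩ := exists_max_image S w ⟨j₀, hj₀⟩
  have hej : e ≤ w j := hej₀.trans (hmax j₀ hj₀)
  have hwj : 0 < w j := he.trans_le hej
  have hnum : w j ≤ ∑ k ∈ S, w k * x k :=
    calc w j ≤ w j * x j := le_mul_of_one_le_right hwj.le (hx j hj)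
      _ ≤ ∑ k ∈ S, w k * x k :=
        single_le_sum (f := fun k => w k * x k)
          (fun k hk => mul_nonneg (hw k hk) (zero_le_one.trans (hx k hk))) hj
  have hden : ∑ k ∈ S, w k + e ≤ ((#S : ℝ) + 1) * w j :=
    calc ∑ k ∈ S, w k + e ≤ ∑ _k ∈ S, w j + w j := add_le_add (sum_le_sum hmax) hej
      _ = ((#S : ℝ) + 1) * w j := by rw [sum_const, nsmul_eq_mul]; ring
  calc 1 / ((#S : ℝ) + 1) = w j / (((#S : ℝ) + 1) * w j) := by field_simp
    _ ≤ (∑ k ∈ S, w k * x k) / (∑ k ∈ S, w k + e) :=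
      div_le_div₀ (hwj.le.trans hnum) hnum
        (add_pos_of_nonneg_of_pos (Finset.sum_nonneg hw) he) hden

theorem weighted_sum_div_le {ε L : ℝ} (hw : ∀ k ∈ S, 0 ≤ w k) (hwe : ∀ k ∈ S, w k ≤ ε * e)
    (hx : ∀ k ∈ S, 0 ≤ x k) (hxL : ∀ k ∈ S, x k ≤ L) (he : 0 < e) :
    (∑ k ∈ S, w k * x k) / (∑ k ∈ S, w k + e) ≤ L * #S * ε := by
  have hnum : ∑ k ∈ S, w k * x k ≤ L * #S * ε * e :=
    calc ∑ k ∈ S, w k * x k ≤ ∑ _k ∈ S, ε * e * L :=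
          sum_le_sum fun k hk =>
            mul_le_mul (hwe k hk) (hxL k hk) (hx k hk) ((hw k hk).trans (hwe k hk))
      _ = L * #S * ε * e := by rw [sum_const, nsmul_eq_mul]; ring
  calc (∑ k ∈ S, w k * x k) / (∑ k ∈ S, w k + e) ≤ (∑ k ∈ S, w k * x k) / e :=
        div_le_div_of_nonneg_left (Finset.sum_nonneg fun k hk => mul_nonneg (hw k hk) (hx k hk))
          he (le_add_of_nonneg_left (Finset.sum_nonneg hw))
    _ ≤ L * #S * ε := (div_le_iff₀ he).mpr hnum

end WeightedAverage

theorem stmt10_general (n ℓ : ℕ)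
    (v : Fin n → Fin ℓ → ℝ)
    (hbin : ∀ i s, v i s = 0 ∨ v i s = 1)
    (hnz : ∀ i, v i ≠ 0)
    (t β δ : ℝ) (hβ : 0 < β)
    (c : Fin n → Fin n → ℝ)
    (A : Fin n → ℝ)
    (hA : ∀ i, A i =
      (∑ j ∈ Finset.univ.erase i, Real.exp (β * (c i j + 1)) * (∑ s, v j s)) /
        ((∑ k ∈ Finset.univ.erase i, Real.exp (β * (c i k + 1))) +
          Real.exp (β * (t + 1)))) :
    ((∃ i j : Fin n, i ≠ j ∧ t ≤ c i j) → ∃ i, 1 / (n : ℝ) ≤ A i) ∧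
    ((∀ i j : Fin n, i ≠ j → c i j ≤ t - δ) →
      ∀ i, A i ≤ (ℓ : ℝ) * n * Real.exp (-(β * δ))) := by
  have hvbin : ∀ i, IsBinary (v i) := hbin
  constructor
  · rintro ⟨i, j, hij, htc⟩
    have hcard : (#(univ.erase i) : ℝ) + 1 = n := by
      exact_mod_cast (card_erase_add_one (mem_univ i)).trans (card_fin n)
    refine ⟨i, ?_⟩
    rw [hA i, ← hcard]
    exact inv_card_add_one_le_weighted_sum_div (fun k _ => (Real.exp_pos _).le)
      (fun k _ => (hvbin k).one_le_sum (hnz k)) (Real.exp_pos _)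
      (mem_erase.2 ⟨hij.symm, mem_univ j⟩) (Real.exp_le_exp.2 (by gcongr))
  · intro hsep i
    have hweight : ∀ k ∈ univ.erase i,
        Real.exp (β * (c i k + 1)) ≤ Real.exp (-(β * δ)) * Real.exp (β * (t + 1)) := by
      intro k hk
      have := mul_le_mul_of_nonneg_left (hsep i k (mem_erase.1 hk).1.symm) hβ.le
      rw [← Real.exp_add]
      exact Real.exp_le_exp.2 (by linarith)
    rw [hA i]
    refine (weighted_sum_div_le (fun k _ => (Real.exp_pos _).le) hweight
      (fun k _ => (hvbin k).sum_nonneg) (fun k _ => by simpa using (hvbin k).sum_le_card)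
      (Real.exp_pos _)).trans ?_
    have hcard : #(univ.erase i) ≤ n := (card_erase_le).trans (card_fin n).le
    gcongr

/-- The yes/no gap of the attention entries in the construction showing a single
attention unit with input and output MLPs solves `MSD_{n,ℓ,t}`. -/
theorem stmt10 (n ℓ : ℕ) (hn : 2 ≤ n) (hℓ : 1 ≤ ℓ)
    (v : Fin n → Fin ℓ → ℝ)
    (hbin : ∀ i s, v i s = 0 ∨ v i s = 1)
    (hnz : ∀ i, v i ≠ 0)
    (t β δ : ℝ) (ht0 : 0 ≤ t) (ht1 : t ≤ 1) (hβ : 0 < β) (hδ : 0 < δ)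
    (c : Fin n → Fin n → ℝ)
    (hc : ∀ i j, c i j = (∑ s, v i s * v j s) / (euclNorm (v i) * euclNorm (v j)))
    (A : Fin n → ℝ)
    (hA : ∀ i, A i =
      (∑ j ∈ Finset.univ.erase i, Real.exp (β * (c i j + 1)) * (∑ s, v j s)) /
        ((∑ k ∈ Finset.univ.erase i, Real.exp (β * (c i k + 1))) +
          Real.exp (β * (t + 1)))) :
    ((∃ i j : Fin n, i ≠ j ∧ t ≤ c i j) → ∃ i, 1 / (n : ℝ) ≤ A i) ∧
    ((∀ i j : Fin n, i ≠ j → c i j ≤ t - δ) →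
      ∀ i, A i ≤ (ℓ : ℝ) * n * Real.exp (-(β * δ))) :=
  stmt10_general n ℓ v hbin hnz t β δ hβ c A hA
end

section
/- Let n ≥ 2, ℓ ≥ 1, let v₁,…,vₙ : Fin ℓ → ℝ be nonzero binary vectors, and let t ∈ [0,1], β > 0, δ > 0. Write c(i,j) = ⟨vᵢ, vⱼ⟩/(‖vᵢ‖·‖vⱼ‖) for the cosine similarity, and for each i define Aᵢ = (∑_{j ≠ i} exp(−β·(c(i,j)+1)) · (∑_t vⱼ t)) / (∑_{k ≠ i} exp(−β·(c(i,k)+1)) + exp(−β·(t+1))). Then: (a) if there exist i ≠ j with c(i,j) ≤ t, there exists i with Aᵢ ≥ 1/n; and (b) if c(i,j) ≥ t + δ for all i ≠ j, then Aᵢ ≤ ℓ · n · exp(−β·δ) for every i. -/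
open Finset

/-!
The entry `Aᵢ` is a softmax-weighted average of the counts `∑ₜ vⱼ t ∈ [1, ℓ]`, where the end
token contributes weight `exp(-β(t+1))` and count `0`. If some `c(i,j) ≤ t`, the weight of `j`
dominates that of the end token, so the numerator is at least half the denominator and
`Aᵢ ≥ 1/2 ≥ 1/n`.
If all `c(i,j) ≥ t + δ`, every weight is at most `exp(-βδ)` times that of the end token, so
`Aᵢ ≤ (n-1) · ℓ · exp(-βδ)`.
-/

section Binary

variable {ι : Type*} [Fintype ι] {v : ι → ℝ}

lemma one_le_sum_of_binary (hbin : ∀ s, v s = 0 ∨ v s = 1) (hv : v ≠ 0) :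
    1 ≤ ∑ s, v s := by
  obtain ⟨s, hs⟩ := Function.ne_iff.mp hv
  calc (1 : ℝ) = v s := ((hbin s).resolve_left hs).symm
    _ ≤ ∑ s, v s :=
      single_le_sum (fun s _ => by rcases hbin s with h | h <;> simp [h]) (mem_univ s)

lemma sum_le_card_of_binary (hbin : ∀ s, v s = 0 ∨ v s = 1) :
    ∑ s, v s ≤ Fintype.card ι := by
  calc ∑ s, v s ≤ ∑ _s : ι, (1 : ℝ) :=
        sum_le_sum fun s _ => by rcases hbin s with h | h <;> simp [h]
    _ = Fintype.card ι := by simp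

end Binary

section WeightedAverage

variable {ι : Type*} (s : Finset ι) (w m : ι → ℝ) {E : ℝ}

lemma half_le_weighted_sum_div (hw : ∀ k ∈ s, 0 ≤ w k) (hm : ∀ k ∈ s, 1 ≤ m k)
    (hE : 0 < E) {j : ι} (hj : j ∈ s) (hEj : E ≤ w j) :
    1 / 2 ≤ (∑ k ∈ s, w k * m k) / (∑ k ∈ s, w k + E) := by
  have hS : ∑ k ∈ s, w k ≤ ∑ k ∈ s, w k * m k :=
    sum_le_sum fun k hk => le_mul_of_one_le_right (hw k hk) (hm k hk)
  have hE_le : E ≤ ∑ k ∈ s, w k * m k :=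
    calc E ≤ w j * m j := hEj.trans (le_mul_of_one_le_right (hE.le.trans hEj) (hm j hj))
      _ ≤ ∑ k ∈ s, w k * m k :=
        single_le_sum (fun k hk => mul_nonneg (hw k hk) (zero_le_one.trans (hm k hk))) hj
  rw [div_le_div_iff₀ two_pos (add_pos_of_nonneg_of_pos (sum_nonneg hw) hE)]
  linarith

lemma weighted_sum_div_le_s11 {ε M : ℝ} (hw : ∀ k ∈ s, 0 ≤ w k)
    (hwE : ∀ k ∈ s, w k ≤ ε * E) (hm : ∀ k ∈ s, 0 ≤ m k) (hmM : ∀ k ∈ s, m k ≤ M)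
    (hE : 0 < E) (hε : 0 ≤ ε) (hM : 0 ≤ M) :
    (∑ k ∈ s, w k * m k) / (∑ k ∈ s, w k + E) ≤ #s * M * ε := by
  have hN : ∑ k ∈ s, w k * m k ≤ #s * M * ε * E :=
    calc ∑ k ∈ s, w k * m k ≤ ∑ _k ∈ s, ε * E * M :=
          sum_le_sum fun k hk => mul_le_mul (hwE k hk) (hmM k hk) (hm k hk) (by positivity)
      _ = #s * M * ε * E := by rw [sum_const, nsmul_eq_mul]; ring
  rw [div_le_iff₀ (add_pos_of_nonneg_of_pos (sum_nonneg hw) hE)]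
  nlinarith [mul_nonneg (by positivity : (0 : ℝ) ≤ #s * M * ε) (sum_nonneg hw)]

end WeightedAverage

lemma exp_neg_mul_add_one_le {β x y : ℝ} (hβ : 0 ≤ β) (hxy : x ≤ y) :
    Real.exp (-(β * (y + 1))) ≤ Real.exp (-(β * (x + 1))) :=
  Real.exp_le_exp.mpr (by nlinarith)

theorem stmt11_general (n ℓ : ℕ) (hn : 2 ≤ n)
    (v : Fin n → Fin ℓ → ℝ)
    (hbin : ∀ i s, v i s = 0 ∨ v i s = 1)
    (hnz : ∀ i, v i ≠ 0)
    (t β δ : ℝ) (hβ : 0 < β)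
    (c : Fin n → Fin n → ℝ)
    (A : Fin n → ℝ)
    (hA : ∀ i, A i =
      (∑ j ∈ Finset.univ.erase i, Real.exp (-(β * (c i j + 1))) * (∑ s, v j s)) /
        ((∑ k ∈ Finset.univ.erase i, Real.exp (-(β * (c i k + 1)))) +
          Real.exp (-(β * (t + 1))))) :
    ((∃ i j : Fin n, i ≠ j ∧ c i j ≤ t) → ∃ i, 1 / (n : ℝ) ≤ A i) ∧
    ((∀ i j : Fin n, i ≠ j → t + δ ≤ c i j) →
      ∀ i, A i ≤ (ℓ : ℝ) * n * Real.exp (-(β * δ))) := by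
  have hcount_pos : ∀ j, 1 ≤ ∑ s, v j s := fun j => one_le_sum_of_binary (hbin j) (hnz j)
  refine ⟨fun ⟨i, j, hij, hle⟩ => ⟨i, ?_⟩, fun hall i => ?_⟩
  · have hn' : (2 : ℝ) ≤ n := by exact_mod_cast hn
    calc 1 / (n : ℝ) ≤ 1 / 2 := one_div_le_one_div_of_le two_pos hn'
      _ ≤ A i := hA i ▸ half_le_weighted_sum_div _ _ _ (fun _ _ => (Real.exp_pos _).le)
          (fun k _ => hcount_pos k) (Real.exp_pos _) (mem_erase.mpr ⟨hij.symm, mem_univ j⟩)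
          (exp_neg_mul_add_one_le hβ.le hle)
  · have hwE : ∀ k ∈ univ.erase i,
        Real.exp (-(β * (c i k + 1))) ≤ Real.exp (-(β * δ)) * Real.exp (-(β * (t + 1))) := by
      intro k hk
      rw [← Real.exp_add, show -(β * δ) + -(β * (t + 1)) = -(β * (t + δ + 1)) by ring]
      exact exp_neg_mul_add_one_le hβ.le (hall i k (ne_of_mem_erase hk).symm)
    have hcard : (#(univ.erase i) : ℝ) ≤ n := by
      exact_mod_cast card_erase_le.trans (card_fin n).le
    calc A i ≤ #(univ.erase i) * ℓ * Real.exp (-(β * δ)) := hA i ▸ weighted_sum_div_le_s11 _ _ _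
          (fun _ _ => (Real.exp_pos _).le) hwE (fun k _ => zero_le_one.trans (hcount_pos k))
          (fun k _ => (sum_le_card_of_binary (hbin k)).trans (by simp)) (Real.exp_pos _)
          (Real.exp_pos _).le (Nat.cast_nonneg ℓ)
      _ ≤ n * ℓ * Real.exp (-(β * δ)) := by gcongr
      _ = ℓ * n * Real.exp (-(β * δ)) := by ring

/-- The yes/no gap of the attention entries in the construction showing a single
attention unit with input and output MLPs solves `LSD_{n,ℓ,t}`. -/
theorem stmt11 (n ℓ : ℕ) (hn : 2 ≤ n) (hℓ : 1 ≤ ℓ)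
    (v : Fin n → Fin ℓ → ℝ)
    (hbin : ∀ i s, v i s = 0 ∨ v i s = 1)
    (hnz : ∀ i, v i ≠ 0)
    (t β δ : ℝ) (ht0 : 0 ≤ t) (ht1 : t ≤ 1) (hβ : 0 < β) (hδ : 0 < δ)
    (c : Fin n → Fin n → ℝ)
    (hc : ∀ i j, c i j = (∑ s, v i s * v j s) / (euclNorm (v i) * euclNorm (v j)))
    (A : Fin n → ℝ)
    (hA : ∀ i, A i =
      (∑ j ∈ Finset.univ.erase i, Real.exp (-(β * (c i j + 1))) * (∑ s, v j s)) /
        ((∑ k ∈ Finset.univ.erase i, Real.exp (-(β * (c i k + 1)))) +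
          Real.exp (-(β * (t + 1))))) :
    ((∃ i j : Fin n, i ≠ j ∧ c i j ≤ t) → ∃ i, 1 / (n : ℝ) ≤ A i) ∧
    ((∀ i j : Fin n, i ≠ j → t + δ ≤ c i j) →
      ∀ i, A i ≤ (ℓ : ℝ) * n * Real.exp (-(β * δ))) :=
  stmt11_general n ℓ hn v hbin hnz t β δ hβ c A hA
end
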